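/- Personick optimality: in the Bayesian setup, if B* is a Personick estimator, then for every Hermitian matrix C on the sensor space, Σ_x P(x)·Re tr((C − a(x)·1)²·ρ_x) ≥ Σ_x P(x)·Re tr((B* − a(x)·1)²·ρ_x), and the minimum value equals Σ_x P(x)·a(x)² − Re tr((B*)²·ρ̄). -/

import Mathlib

open Matrix BigOperators ComplexOrder

noncomputable section

/-- A density matrix: positive semidefinite (hence Hermitian) with unit trace. -/
def IsDensity {d : Type*} [Fintype d] [DecidableEq d] (ρ : Matrix d d ℂ) : Prop :=
  ρ.PosSemidef ∧ ρ.trace = 1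

/-- The Jordan-product map `E_ρ(A) = (ρA + Aρ)/2`. -/
def jordan {d : Type*} [Fintype d] (ρ A : Matrix d d ℂ) : Matrix d d ℂ :=
  ((1 : ℂ)/2) • (ρ * A + A * ρ)

/-- The weighted squared norm `‖A‖²_ρ = Re tr(A² ρ)`. -/
def nsq {d : Type*} [Fintype d] (ρ A : Matrix d d ℂ) : ℝ :=
  (Matrix.trace (A * A * ρ)).re

/-- The channel `F(X) = Σ_i K_i X K_iᴴ` determined by a Kraus family. -/
def krausMap {n m ι : Type*} [Fintype n] [Fintype m] [Fintype ι]
    (K : ι → Matrix m n ℂ) (X : Matrix n n ℂ) : Matrix m m ℂ :=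
  ∑ i, K i * X * (K i)ᴴ

/-- The Hilbert–Schmidt adjoint `F*(Y) = Σ_i K_iᴴ Y K_i`. -/
def krausAdj {n m ι : Type*} [Fintype n] [Fintype m] [Fintype ι]
    (K : ι → Matrix m n ℂ) (Y : Matrix m m ℂ) : Matrix n n ℂ :=
  ∑ i, (K i)ᴴ * Y * K i

/-- Trace preservation: `Σ_i K_iᴴ K_i = 1`. -/
def TracePreserving {n m ι : Type*} [Fintype n] [DecidableEq n] [Fintype m] [Fintype ι]
    (K : ι → Matrix m n ℂ) : Prop :=
  ∑ i, (K i)ᴴ * K i = 1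

/-- The divergence `D_{σ,F}(A,B) = ‖A‖²_σ − 2 Re tr(F*(B)·E_σ(A)) + ‖B‖²_{F(σ)}`. -/
def Dvg {n m ι : Type*} [Fintype n] [Fintype m] [Fintype ι]
    (σ : Matrix n n ℂ) (K : ι → Matrix m n ℂ) (A : Matrix n n ℂ) (B : Matrix m m ℂ) : ℝ :=
  nsq σ A - 2 * (Matrix.trace (krausAdj K B * jordan σ A)).re + nsq (krausMap K σ) B

/-- `B` solves the Jordan GCE equation for `(σ, F, A)`: `E_{F(σ)}(B) = F(E_σ(A))`. -/
def SolvesGCE {n m ι : Type*} [Fintype n] [Fintype m] [Fintype ι]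
    (σ : Matrix n n ℂ) (K : ι → Matrix m n ℂ) (A : Matrix n n ℂ) (B : Matrix m m ℂ) : Prop :=
  jordan (krausMap K σ) B = krausMap K (jordan σ A)

lemma psd_trace_re_nonneg {d : Type*} [Fintype d] [DecidableEq d]
    {M : Matrix d d ℂ} (hM : M.PosSemidef) : 0 ≤ (Matrix.trace M).re := by
  have h : (0:ℂ) ≤ Matrix.trace M := by
    rw [Matrix.trace]
    refine Finset.sum_nonneg fun i _ => ?_
    have h2 := hM.dotProduct_mulVec_nonneg (Pi.single i 1)
    simpa [dotProduct, Matrix.mulVec, Pi.single_apply] using h2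
  simpa using (Complex.le_def.mp h).1


/-- Personick optimality. -/
theorem personick_optimality {X d : Type*} [Fintype X] [Fintype d] [DecidableEq d]
    (P : X → ℝ) (hP : ∀ x, 0 ≤ P x) (hPsum : ∑ x, P x = 1)
    (a : X → ℝ) (ρ : X → Matrix d d ℂ) (hρ : ∀ x, IsDensity (ρ x))
    (Bstar : Matrix d d ℂ) (hBstar : Bstar.IsHermitian)
    (hPersonick : (∑ x, (P x : ℂ) • ρ x) * Bstar + Bstar * (∑ x, (P x : ℂ) • ρ x)
      = (2 : ℂ) • ∑ x, ((P x * a x : ℝ) : ℂ) • ρ x) :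
    (∀ C : Matrix d d ℂ, C.IsHermitian →
      ∑ x, P x * (Matrix.trace ((C - (a x : ℂ) • 1) * (C - (a x : ℂ) • 1) * ρ x)).re ≥
      ∑ x, P x *
        (Matrix.trace ((Bstar - (a x : ℂ) • 1) * (Bstar - (a x : ℂ) • 1) * ρ x)).re) ∧
    ∑ x, P x * (Matrix.trace ((Bstar - (a x : ℂ) • 1) * (Bstar - (a x : ℂ) • 1) * ρ x)).re
      = ∑ x, P x * (a x) ^ 2
        - (Matrix.trace (Bstar * Bstar * (∑ x, (P x : ℂ) • ρ x))).re := by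
  set ρb : Matrix d d ℂ := ∑ x, (P x : ℂ) • ρ x with hρbdef
  set L : Matrix d d ℂ := ∑ x, ((P x * a x : ℝ) : ℂ) • ρ x with hLdef
  -- key complex identity
  have key : ∀ C : Matrix d d ℂ,
      ∑ x, P x * (Matrix.trace ((C - (a x : ℂ) • 1) * (C - (a x : ℂ) • 1) * ρ x)).re
      = (Matrix.trace (C * C * ρb)).re - 2 * (Matrix.trace (C * L)).re
        + ∑ x, P x * a x ^ 2 := by
    intro C
    have expand : ∀ x, Matrix.trace ((C - (a x : ℂ) • 1) * (C - (a x : ℂ) • 1) * ρ x)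
        = Matrix.trace (C * C * ρ x) - (2 * (a x : ℂ)) * Matrix.trace (C * ρ x)
          + ((a x : ℂ))^2 := by
      intro x
      have h1 : (ρ x).trace = 1 := (hρ x).2
      have hm : (C - (a x : ℂ) • 1) * (C - (a x : ℂ) • 1) * ρ x
          = C * C * ρ x - (2 * (a x : ℂ)) • (C * ρ x) + ((a x : ℂ)^2) • ρ x := by
        simp only [sub_mul, mul_sub, smul_mul_assoc, mul_smul_comm, one_mul, mul_one, smul_smul]
        module
      rw [hm, Matrix.trace_add, Matrix.trace_sub, Matrix.trace_smul, Matrix.trace_smul, h1,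
        smul_eq_mul, smul_eq_mul, mul_one]
      try ring
    have h2 : Matrix.trace (C * C * ρb) = ∑ x, (P x : ℂ) * Matrix.trace (C * C * ρ x) := by
      rw [hρbdef, Finset.mul_sum, Matrix.trace_sum]
      exact Finset.sum_congr rfl fun x _ => by
        rw [mul_smul_comm, Matrix.trace_smul, smul_eq_mul]
    have h3 : Matrix.trace (C * L) = ∑ x, (P x : ℂ) * (a x : ℂ) * Matrix.trace (C * ρ x) := by
      rw [hLdef, Finset.mul_sum, Matrix.trace_sum]
      refine Finset.sum_congr rfl fun x _ => ?_
      rw [mul_smul_comm, Matrix.trace_smul, smul_eq_mul]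
      push_cast
      ring
    have csum : ∑ x, (P x : ℂ) * Matrix.trace ((C - (a x : ℂ) • 1) * (C - (a x : ℂ) • 1) * ρ x)
        = Matrix.trace (C * C * ρb) - 2 * Matrix.trace (C * L)
          + ∑ x, (P x : ℂ) * (a x : ℂ)^2 := by
      rw [h2, h3, Finset.mul_sum, ← Finset.sum_sub_distrib, ← Finset.sum_add_distrib]
      refine Finset.sum_congr rfl fun x _ => ?_
      rw [expand x]
      ring
    have lhs_eq : ∑ x, P x * (Matrix.trace ((C - (a x : ℂ) • 1) * (C - (a x : ℂ) • 1) * ρ x)).re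
        = ∑ x, ((P x : ℂ) * Matrix.trace ((C - (a x : ℂ) • 1) * (C - (a x : ℂ) • 1) * ρ x)).re :=
      Finset.sum_congr rfl fun x _ => (Complex.re_ofReal_mul _ _).symm
    rw [lhs_eq, ← Complex.re_sum, csum, Complex.add_re, Complex.sub_re, Complex.re_sum]
    congr 1
    · congr 1
      have h4 : ((2:ℂ) * Matrix.trace (C * L)).re = 2 * (Matrix.trace (C * L)).re := by
        have := Complex.re_ofReal_mul 2 (Matrix.trace (C * L))
        push_cast at this
        exact this
      exact h4
    · refine Finset.sum_congr rfl fun x _ => ?_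
      have h5 : (P x : ℂ) * (a x : ℂ)^2 = ((P x * a x ^ 2 : ℝ) : ℂ) := by push_cast; ring
      rw [h5, Complex.ofReal_re]
  -- Personick consequence
  have hBL : Matrix.trace (Bstar * L) = Matrix.trace (Bstar * Bstar * ρb) := by
    have h2 : (2:ℂ) * Matrix.trace (Bstar * L) = (2:ℂ) * Matrix.trace (Bstar * Bstar * ρb) := by
      calc (2:ℂ) * Matrix.trace (Bstar * L) = Matrix.trace (Bstar * ((2:ℂ) • L)) := by
            rw [mul_smul_comm, Matrix.trace_smul, smul_eq_mul]
        _ = Matrix.trace (Bstar * (ρb * Bstar + Bstar * ρb)) := by rw [← hPersonick]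
        _ = Matrix.trace (Bstar * ρb * Bstar) + Matrix.trace (Bstar * (Bstar * ρb)) := by
            rw [mul_add, Matrix.trace_add, mul_assoc]
        _ = (2:ℂ) * Matrix.trace (Bstar * Bstar * ρb) := by
            rw [Matrix.trace_mul_cycle Bstar ρb Bstar, ← mul_assoc]
            ring
    exact mul_left_cancel₀ two_ne_zero h2
  have hmin : ∑ x, P x *
      (Matrix.trace ((Bstar - (a x : ℂ) • 1) * (Bstar - (a x : ℂ) • 1) * ρ x)).re
      = ∑ x, P x * (a x) ^ 2 - (Matrix.trace (Bstar * Bstar * ρb)).re := by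
    rw [key Bstar, hBL]
    ring
  have hCL : ∀ C : Matrix d d ℂ, (2:ℂ) * Matrix.trace (C * L)
      = Matrix.trace (Bstar * C * ρb) + Matrix.trace (C * Bstar * ρb) := by
    intro C
    calc (2:ℂ) * Matrix.trace (C * L) = Matrix.trace (C * ((2:ℂ) • L)) := by
          rw [mul_smul_comm, Matrix.trace_smul, smul_eq_mul]
      _ = Matrix.trace (C * (ρb * Bstar + Bstar * ρb)) := by rw [← hPersonick]
      _ = Matrix.trace (C * ρb * Bstar) + Matrix.trace (C * Bstar * ρb) := by
          rw [mul_add, Matrix.trace_add, mul_assoc, mul_assoc]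
      _ = Matrix.trace (Bstar * C * ρb) + Matrix.trace (C * Bstar * ρb) := by
          rw [Matrix.trace_mul_cycle C ρb Bstar]
  -- positivity of ρb
  have hterm : ∀ x : X, ((P x : ℂ) • ρ x).PosSemidef := by
    intro x
    refine Matrix.PosSemidef.of_dotProduct_mulVec_nonneg ?_ ?_
    · show ((P x : ℂ) • ρ x)ᴴ = (P x : ℂ) • ρ x
      rw [Matrix.conjTranspose_smul, (hρ x).1.1]
      simp [Complex.star_def, Complex.conj_ofReal]
    · intro v
      rw [Matrix.smul_mulVec, dotProduct_smul, smul_eq_mul]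
      exact mul_nonneg (Complex.zero_le_real.mpr (hP x)) ((hρ x).1.dotProduct_mulVec_nonneg v)
  have hρbPSD : ρb.PosSemidef := by
    rw [hρbdef]
    exact Finset.sum_induction _ _ (fun A B hA hB => hA.add hB) Matrix.PosSemidef.zero
      (fun x _ => hterm x)
  refine ⟨fun C hC => ?_, hmin⟩
  rw [ge_iff_le, hmin, key C]
  set D : Matrix d d ℂ := C - Bstar with hDdef
  have hDh : Dᴴ = D := by
    rw [hDdef, Matrix.conjTranspose_sub, hBstar.eq, hC.eq]
  have hDpos : 0 ≤ (Matrix.trace (D * ρb * Dᴴ)).re :=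
    psd_trace_re_nonneg (hρbPSD.mul_mul_conjTranspose_same D)
  rw [hDh] at hDpos
  have hmat : D * D * ρb = C * C * ρb - Bstar * C * ρb - C * Bstar * ρb
      + Bstar * Bstar * ρb := by
    rw [hDdef]
    noncomm_ring
  have h6 : Matrix.trace (D * ρb * D) = Matrix.trace (C * C * ρb)
      - (2:ℂ) * Matrix.trace (C * L) + Matrix.trace (Bstar * Bstar * ρb) := by
    rw [show Matrix.trace (D * ρb * D) = Matrix.trace (D * D * ρb) from
      Matrix.trace_mul_cycle D ρb D, hmat, hCL C, Matrix.trace_add, Matrix.trace_sub,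
      Matrix.trace_sub]
    ring
  rw [h6] at hDpos
  have h7 : (0:ℝ) ≤ (Matrix.trace (C * C * ρb)).re - 2 * (Matrix.trace (C * L)).re
      + (Matrix.trace (Bstar * Bstar * ρb)).re := by
    have h8 : ((2:ℂ) * Matrix.trace (C * L)).re = 2 * (Matrix.trace (C * L)).re := by
      have := Complex.re_ofReal_mul 2 (Matrix.trace (C * L))
      push_cast at this
      exact this
    rw [Complex.add_re, Complex.sub_re, h8] at hDpos
    exact hDpos
  linarith
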